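/- arXiv:1307.1023 — 6 statements merged into one kernel-verified Lean document; each statement's English description precedes it below -/
import Mathlib

section
/- Let n be a natural number, k ∈ ℝ, and for i = 1,…,n let λᵢ, μᵢ, αᵢ, βᵢ, Aᵢ, Bᵢ ∈ ℝ with λᵢ² + μᵢ² = k² for every i. Define T : ℝ² → ℝ by T(x,y) = Σᵢ₌₁ⁿ ( Aᵢ sin(λᵢ x + μᵢ y + αᵢ) + Bᵢ cos(λᵢ x + μᵢ y + βᵢ) ). Let L ⊆ ℝ² be an affine line and let σ_L : ℝ² → ℝ² be the (affine, isometric) reflection across L. If T(p) = 0 for every p ∈ L, then T(σ_L(p)) = -T(p) for every p ∈ ℝ². (Lamé's theorem, part 1: such a solution of the Helmholtz equation is antisymmetric about any line along which it vanishes.) -/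
/-!
Choose coordinates `(t, s)` adapted to the line, `t` along it and `s` across it. In them each
term of `T` becomes a wave `w (a t + b s + c)` with `a² + b² = k²`, and the addition formulas give
`T(t, s) + T(t, -s) = 2 ∑ cos (b s) wᵢ(aᵢ t + cᵢ)`. Differentiating `∑ wᵢ(aᵢ t + cᵢ) = 0` twice
multiplies the i-th term by `-aᵢ²`, so `∑ p(aᵢ²) wᵢ(aᵢ t + cᵢ) = 0` for every polynomial `p`.
Since `cos (bᵢ s) = cos (s √(k² - aᵢ²))` depends on `i` only through `aᵢ²`, Lagrange interpolation
makes it such a polynomial in `aᵢ²`.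
-/

open EuclideanGeometry Real Finset

noncomputable def phasedWave (A B α β x : ℝ) : ℝ := A * sin (x + α) + B * cos (x + β)

theorem phasedWave_add_add_phasedWave_sub (A B α β x y : ℝ) :
    phasedWave A B α β (x + y) + phasedWave A B α β (x - y) =
      2 * cos y * phasedWave A B α β x := by
  simp only [phasedWave, add_right_comm _ y, sub_add_eq_add_sub, sin_add, sin_sub, cos_add,
    cos_sub]
  ring

theorem phasedWave_add_pi (A B α β x : ℝ) :
    phasedWave A B (α + π) (β + π) x = -phasedWave A B α β x := by
  simp only [phasedWave, ← add_assoc, sin_add_pi, cos_add_pi]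
  ring

theorem hasDerivAt_phasedWave_comp (A B α β a c t : ℝ) :
    HasDerivAt (fun t => phasedWave A B α β (a * t + c))
      (a * phasedWave A B (α + π / 2) (β + π / 2) (a * t + c)) t := by
  have hlin : HasDerivAt (fun t => a * t + c) a t := by
    simpa using ((hasDerivAt_id t).const_mul a).add_const c
  refine (((hlin.add_const α).sin.const_mul A).fun_add
    ((hlin.add_const β).cos.const_mul B)).congr_deriv ?_
  simp only [phasedWave, ← add_assoc, sin_add_pi_div_two, cos_add_pi_div_two]
  ring

theorem sum_eq_zero_of_hasDerivAt {ι : Type*} [Fintype ι] {f f' : ι → ℝ → ℝ}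
    (hf : ∀ i t, HasDerivAt (f i) (f' i t) t) (h : ∀ t, ∑ i, f i t = 0) (t : ℝ) :
    ∑ i, f' i t = 0 := by
  have hsum : HasDerivAt (fun t => ∑ i, f i t) (∑ i, f' i t) t :=
    HasDerivAt.fun_sum fun i _ => hf i t
  rw [funext h] at hsum
  exact hsum.unique (hasDerivAt_const t 0)

theorem sum_sq_pow_mul_phasedWave_eq_zero {ι : Type*} [Fintype ι] {a c A B α β : ι → ℝ}
    (h : ∀ t, ∑ i, phasedWave (A i) (B i) (α i) (β i) (a i * t + c i) = 0) (j : ℕ) (t : ℝ) :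
    ∑ i, (a i ^ 2) ^ j * phasedWave (A i) (B i) (α i) (β i) (a i * t + c i) = 0 := by
  induction j generalizing t with
  | zero => simpa using h t
  | succ j ih =>
    have hderiv := sum_eq_zero_of_hasDerivAt
      (fun i t => (hasDerivAt_phasedWave_comp _ _ _ _ _ _ t).const_mul ((a i ^ 2) ^ j)) ih
    have hderiv2 := sum_eq_zero_of_hasDerivAt
      (fun i t => ((hasDerivAt_phasedWave_comp _ _ _ _ _ _ t).const_mul (a i)).const_mul
        ((a i ^ 2) ^ j)) (fun t => by simpa only [mul_left_comm] using hderiv t) t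
    simp only [add_assoc, add_halves, phasedWave_add_pi] at hderiv2
    rw [← neg_eq_zero, ← sum_neg_distrib, ← hderiv2]
    exact sum_congr rfl fun i _ => by ring

theorem sum_mul_eq_zero_of_forall_sum_pow_mul_eq_zero {K ι : Type*} [Field K] [Fintype ι]
    {c x : ι → K} (h : ∀ j : ℕ, ∑ i, c i ^ j * x i = 0) (g : K → K) :
    ∑ i, g (c i) * x i = 0 := by
  classical
  have hp : ∀ i, g (c i) = (Lagrange.interpolate (univ.image c) id g).eval (c i) := fun i =>
    (Lagrange.eval_interpolate_at_node g (Set.injOn_id _) (mem_image_of_mem c (mem_univ i))).symm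
  simp_rw [hp, Polynomial.eval_eq_sum_range, sum_mul]
  rw [sum_comm]
  exact sum_eq_zero fun j _ => by simp_rw [mul_assoc, ← mul_sum, h j, mul_zero]

theorem sum_cos_mul_phasedWave_eq_zero {ι : Type*} [Fintype ι] {k : ℝ} {a b c A B α β : ι → ℝ}
    (hab : ∀ i, a i ^ 2 + b i ^ 2 = k ^ 2)
    (h : ∀ t, ∑ i, phasedWave (A i) (B i) (α i) (β i) (a i * t + c i) = 0) (t s : ℝ) :
    ∑ i, cos (b i * s) * phasedWave (A i) (B i) (α i) (β i) (a i * t + c i) = 0 := by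
  have hcos : ∀ i, cos (b i * s) = cos (√(k ^ 2 - a i ^ 2) * s) := by
    intro i
    rw [← hab i, add_sub_cancel_left, sqrt_sq_eq_abs]
    rcases abs_choice (b i) with hb | hb <;> simp [hb]
  simp_rw [hcos]
  exact sum_mul_eq_zero_of_forall_sum_pow_mul_eq_zero
    (sum_sq_pow_mul_phasedWave_eq_zero h · t) fun x => cos (√(k ^ 2 - x) * s)

theorem sum_phasedWave_add_sum_phasedWave_neg_eq_zero {ι : Type*} [Fintype ι] {k : ℝ}
    {a b c A B α β : ι → ℝ} (hab : ∀ i, a i ^ 2 + b i ^ 2 = k ^ 2)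
    (h : ∀ t, ∑ i, phasedWave (A i) (B i) (α i) (β i) (a i * t + c i) = 0) (t s : ℝ) :
    ∑ i, phasedWave (A i) (B i) (α i) (β i) (a i * t + b i * s + c i) +
      ∑ i, phasedWave (A i) (B i) (α i) (β i) (a i * t + b i * -s + c i) = 0 := by
  calc _ = ∑ i, 2 * (cos (b i * s) * phasedWave (A i) (B i) (α i) (β i) (a i * t + c i)) := by
        rw [← sum_add_distrib]
        refine sum_congr rfl fun i _ => ?_
        rw [show a i * t + b i * s + c i = a i * t + c i + b i * s by ring,
          show a i * t + b i * -s + c i = a i * t + c i - b i * s by ring,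
          phasedWave_add_add_phasedWave_sub]
        ring
    _ = 0 := by rw [← mul_sum, sum_cos_mul_phasedWave_eq_zero hab h, mul_zero]

theorem Submodule.exists_norm_eq_one_eq_span_singleton {E : Type*} [NormedAddCommGroup E]
    [InnerProductSpace ℝ E] {K : Submodule ℝ E} (hK : Module.finrank ℝ K = 1) :
    ∃ v, ‖v‖ = 1 ∧ K = ℝ ∙ v := by
  obtain ⟨⟨v, hvK⟩, hv0, -⟩ := finrank_eq_one_iff'.mp hK
  have hv : v ≠ 0 := by simpa using hv0
  have : FiniteDimensional ℝ K := Module.finite_of_finrank_eq_succ hK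
  refine ⟨‖v‖⁻¹ • v, norm_smul_inv_norm hv, (Submodule.eq_of_le_of_finrank_eq ?_ ?_).symm⟩
  · exact (Submodule.span_singleton_le_iff_mem _ _).mpr (K.smul_mem _ hvK)
  · rw [finrank_span_singleton (by simpa using hv), hK]

theorem reflection_add_add {V : Type*} [NormedAddCommGroup V] [InnerProductSpace ℝ V]
    {L : AffineSubspace ℝ V} [Nonempty L] [L.direction.HasOrthogonalProjection] {q u : V}
    (hq : q ∈ L) (hu : u ∈ L.directionᗮ) : reflection L (q + u) = q - u := by
  rw [add_comm, ← vadd_eq_add, reflection_orthogonal_vadd hq hu, vadd_eq_add]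
  abel

def perp (v : EuclideanSpace ℝ (Fin 2)) : EuclideanSpace ℝ (Fin 2) := !₂[-v 1, v 0]

@[simp]
theorem perp_apply_zero (v : EuclideanSpace ℝ (Fin 2)) : perp v 0 = -v 1 := rfl

@[simp]
theorem perp_apply_one (v : EuclideanSpace ℝ (Fin 2)) : perp v 1 = v 0 := rfl

theorem perp_mem_orthogonal_span_singleton (v : EuclideanSpace ℝ (Fin 2)) :
    perp v ∈ (ℝ ∙ v)ᗮ := by
  rw [Submodule.mem_orthogonal_singleton_iff_inner_right]
  simp only [PiLp.inner_apply, Fin.sum_univ_two, perp_apply_zero, perp_apply_one,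
    RCLike.inner_apply, conj_trivial]
  ring

theorem exists_eq_add_smul_add_smul_perp {v : EuclideanSpace ℝ (Fin 2)}
    (hv : v 0 ^ 2 + v 1 ^ 2 = 1) (q p : EuclideanSpace ℝ (Fin 2)) :
    ∃ t s : ℝ, p = q + t • v + s • perp v := by
  refine ⟨(p 0 - q 0) * v 0 + (p 1 - q 1) * v 1, (p 1 - q 1) * v 0 - (p 0 - q 0) * v 1, ?_⟩
  ext i
  fin_cases i
  · simp only [Fin.zero_eta, PiLp.add_apply, PiLp.smul_apply, smul_eq_mul, perp_apply_zero]
    linear_combination (-(p 0 - q 0)) * hv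
  · simp only [Fin.mk_one, PiLp.add_apply, PiLp.smul_apply, smul_eq_mul, perp_apply_one]
    linear_combination (-(p 1 - q 1)) * hv

theorem exists_unit_direction_reflection_eq {L : AffineSubspace ℝ (EuclideanSpace ℝ (Fin 2))}
    [Nonempty L] (hline : Module.finrank ℝ L.direction = 1) {q : EuclideanSpace ℝ (Fin 2)}
    (hq : q ∈ L) :
    ∃ v : EuclideanSpace ℝ (Fin 2), v 0 ^ 2 + v 1 ^ 2 = 1 ∧ (∀ t : ℝ, q + t • v ∈ L) ∧
      ∀ t s : ℝ, reflection L (q + t • v + s • perp v) = q + t • v + (-s) • perp v := by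
  obtain ⟨v, hv, hL⟩ := Submodule.exists_norm_eq_one_eq_span_singleton hline
  have hmem : ∀ t : ℝ, q + t • v ∈ L := fun t => by
    simpa [add_comm] using AffineSubspace.vadd_mem_of_mem_direction
      (hL ▸ Submodule.smul_mem _ t (Submodule.mem_span_singleton_self v)) hq
  refine ⟨v, by simpa [Fin.sum_univ_two, hv] using (EuclideanSpace.real_norm_sq_eq v).symm,
    hmem, fun t s => ?_⟩
  rw [reflection_add_add (hmem t)
    (Submodule.smul_mem _ s (hL ▸ perp_mem_orthogonal_span_singleton v)), neg_smul,
    sub_eq_add_neg]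

/-- Lamé's theorem, part 1: a finite trigonometric solution of the Helmholtz
equation is antisymmetric about any affine line along which it vanishes. -/
theorem lame_antisymmetric
    (n : ℕ) (k : ℝ) (lam mu al be A B : Fin n → ℝ)
    (hk : ∀ i, (lam i) ^ 2 + (mu i) ^ 2 = k ^ 2)
    (T : EuclideanSpace ℝ (Fin 2) → ℝ)
    (hT : ∀ p, T p = ∑ i, (A i * Real.sin (lam i * p 0 + mu i * p 1 + al i) +
                            B i * Real.cos (lam i * p 0 + mu i * p 1 + be i)))
    (L : AffineSubspace ℝ (EuclideanSpace ℝ (Fin 2)))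
    [Nonempty L]
    (hline : Module.finrank ℝ L.direction = 1)
    (hvanish : ∀ p ∈ L, T p = 0) :
    ∀ p, T (EuclideanGeometry.reflection L p) = - T p := by
  obtain ⟨⟨q, hq⟩⟩ := ‹Nonempty L›
  obtain ⟨v, hv2, hmem, hreflection⟩ := exists_unit_direction_reflection_eq hline hq
  have hTcoord : ∀ t s : ℝ, T (q + t • v + s • perp v) =
      ∑ i, phasedWave (A i) (B i) (al i) (be i) ((lam i * v 0 + mu i * v 1) * t +
        (mu i * v 0 - lam i * v 1) * s + (lam i * q 0 + mu i * q 1)) := fun t s => by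
    rw [hT]
    refine sum_congr rfl fun i _ => ?_
    simp only [phasedWave, PiLp.add_apply, PiLp.smul_apply, smul_eq_mul, perp_apply_zero,
      perp_apply_one]
    ring_nf
  have hab : ∀ i, (lam i * v 0 + mu i * v 1) ^ 2 + (mu i * v 0 - lam i * v 1) ^ 2 = k ^ 2 :=
    fun i => by linear_combination (lam i ^ 2 + mu i ^ 2) * hv2 + hk i
  have hzero : ∀ t : ℝ, ∑ i, phasedWave (A i) (B i) (al i) (be i)
      ((lam i * v 0 + mu i * v 1) * t + (lam i * q 0 + mu i * q 1)) = 0 := fun t => by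
    have hTline := hTcoord t 0
    simp only [zero_smul, add_zero, mul_zero] at hTline
    rw [← hTline]
    exact hvanish _ (hmem t)
  intro p
  obtain ⟨t, s, rfl⟩ := exists_eq_add_smul_add_smul_perp hv2 q p
  rw [hreflection, hTcoord, hTcoord, eq_neg_iff_add_eq_zero, add_comm]
  exact sum_phasedWave_add_sum_phasedWave_neg_eq_zero hab hzero t s
end

section
/- Let n be a natural number, k ∈ ℝ, and for i = 1,…,n let λᵢ, μᵢ, αᵢ, βᵢ, Aᵢ, Bᵢ ∈ ℝ with λᵢ² + μᵢ² = k² for every i. Define T : ℝ² → ℝ by T(x,y) = Σᵢ₌₁ⁿ ( Aᵢ sin(λᵢ x + μᵢ y + αᵢ) + Bᵢ cos(λᵢ x + μᵢ y + βᵢ) ). Let L ⊆ ℝ² be an affine line, let ν be a unit vector normal to L, and let σ_L : ℝ² → ℝ² be the reflection across L. If the directional derivative of T in the direction ν vanishes at every point of L, then T(σ_L(p)) = T(p) for every p ∈ ℝ². (Lamé's theorem, part 2: such a solution of the Helmholtz equation is symmetric about any line along which its normal derivative vanishes.) -/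
open EuclideanGeometry Real

/-!
Write points as `q + s τ + t ν` with `q` on the line and `τ ⊥ ν` unit vectors; each term of `T`
becomes a plane wave with frequency `(a, b)`, `a² + b² = k²`. The reflection changes the sign of
`t`, and the odd part in `t` of the sum at `s = 0` is `-2 ∑ sin (c bᵢ) Cᵢ`, where `Cᵢ` is the
derivative of the `i`-th wave. The hypothesis says `∑ bᵢ Cᵢ(aᵢ s) = 0` for all `s`; since
`Cᵢ'' + k² Cᵢ = bᵢ² Cᵢ`, differentiating twice and adding `k²` times the identity gives
`∑ bᵢ^(2m+1) Cᵢ(0) = 0` for every `m`, and the Taylor series of `sin` then kills the odd part.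
-/

namespace Lame

noncomputable def wave (A B α β x : ℝ) : ℝ := A * sin (x + α) + B * cos (x + β)

noncomputable def waveDeriv (A B α β x : ℝ) : ℝ := A * cos (x + α) - B * sin (x + β)

section Wave

variable {A B α β : ℝ}

theorem hasDerivAt_add_mul_add (x b γ t : ℝ) : HasDerivAt (fun t => x + t * b + γ) b t := by
  simpa using ((hasDerivAt_id t).mul_const b).const_add x |>.add_const γ

theorem hasDerivAt_wave_comp (x b t : ℝ) :
    HasDerivAt (fun t => wave A B α β (x + t * b)) (b * waveDeriv A B α β (x + t * b)) t := by
  have hu (γ : ℝ) := hasDerivAt_add_mul_add x b γ t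
  exact (((hu α).sin.const_mul A).fun_add ((hu β).cos.const_mul B)).congr_deriv
    (by simp only [waveDeriv]; ring)

theorem hasDerivAt_waveDeriv_comp (x b t : ℝ) :
    HasDerivAt (fun t => waveDeriv A B α β (x + t * b)) (-b * wave A B α β (x + t * b)) t := by
  have hu (γ : ℝ) := hasDerivAt_add_mul_add x b γ t
  exact (((hu α).cos.const_mul A).fun_sub ((hu β).sin.const_mul B)).congr_deriv
    (by simp only [wave]; ring)

theorem wave_sub_sub_wave_add (x y : ℝ) :
    wave A B α β (x - y) - wave A B α β (x + y) = -2 * sin y * waveDeriv A B α β x := by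
  simp only [wave, waveDeriv, sub_add_eq_add_sub, add_right_comm x y, sin_sub, sin_add, cos_sub,
    cos_add]
  ring

end Wave

section Moments

variable {ι : Type*} [Fintype ι] {g g' : ι → ℝ → ℝ} {w : ι → ℝ} {c : ℝ}

/-- `hg` and `hg'` say that `g i` is an eigenfunction of `d²/ds² + c` with eigenvalue `w i`. -/
theorem sum_mul_eigenvalue_mul_eq_zero (hg : ∀ i s, HasDerivAt (g i) (g' i s) s)
    (hg' : ∀ i s, HasDerivAt (g' i) ((w i - c) * g i s) s) {d : ι → ℝ}
    (h : ∀ s, ∑ i, d i * g i s = 0) (s : ℝ) : ∑ i, d i * w i * g i s = 0 := by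
  have hsum (f f' : ι → ℝ → ℝ) (hf : ∀ i s, HasDerivAt (f i) (f' i s) s)
      (h : ∀ s, ∑ i, d i * f i s = 0) (s : ℝ) : ∑ i, d i * f' i s = 0 := by
    have hF := HasDerivAt.fun_sum (u := Finset.univ) fun i _ => (hf i s).const_mul (d i)
    simpa [funext h] using hF.deriv.symm
  have h₂ := hsum g' _ hg' (hsum g g' hg h) s
  calc ∑ i, d i * w i * g i s
      = ∑ i, d i * ((w i - c) * g i s) + c * ∑ i, d i * g i s := by
        rw [Finset.mul_sum, ← Finset.sum_add_distrib]
        exact Finset.sum_congr rfl fun i _ => by ring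
    _ = 0 := by rw [h₂, h s]; ring

theorem sum_mul_eigenvalue_pow_mul_eq_zero (hg : ∀ i s, HasDerivAt (g i) (g' i s) s)
    (hg' : ∀ i s, HasDerivAt (g' i) ((w i - c) * g i s) s) {d : ι → ℝ}
    (h : ∀ s, ∑ i, d i * g i s = 0) (m : ℕ) (s : ℝ) : ∑ i, d i * w i ^ m * g i s = 0 := by
  induction m generalizing s with
  | zero => simpa using h s
  | succ m ih =>
    simpa only [pow_succ, mul_assoc] using sum_mul_eigenvalue_mul_eq_zero hg hg' ih s

end Moments

theorem sum_mul_sin_eq_zero_of_odd_moments {ι : Type*} [Fintype ι] {d b : ι → ℝ}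
    (h : ∀ m : ℕ, ∑ i, d i * b i ^ (2 * m + 1) = 0) (t : ℝ) : ∑ i, d i * sin (b i * t) = 0 := by
  have hs := hasSum_sum (s := Finset.univ) fun i _ => (Real.hasSum_sin (b i * t)).mul_left (d i)
  have hz (m : ℕ) :
      ∑ i, d i * ((-1) ^ m * (b i * t) ^ (2 * m + 1) / (2 * m + 1).factorial) = 0 := by
    calc ∑ i, d i * ((-1) ^ m * (b i * t) ^ (2 * m + 1) / (2 * m + 1).factorial)
        = (-1) ^ m * t ^ (2 * m + 1) / (2 * m + 1).factorial * ∑ i, d i * b i ^ (2 * m + 1) := by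
          rw [Finset.mul_sum]
          exact Finset.sum_congr rfl fun i _ => by ring
      _ = 0 := by rw [h m, mul_zero]
  simp only [hz] at hs
  exact hs.unique hasSum_zero

/-- In coordinates `(s, t)` along and across the line the `i`-th wave has phase
`x i + s * a i + t * b i`; `h` says that the `t`-derivative of the sum vanishes on `t = 0`. -/
theorem sum_wave_sub_eq_sum_wave_add {ι : Type*} [Fintype ι] {k : ℝ} {a b x A B α β : ι → ℝ}
    (hab : ∀ i, a i ^ 2 + b i ^ 2 = k ^ 2)
    (h : ∀ s, ∑ i, b i * waveDeriv (A i) (B i) (α i) (β i) (x i + s * a i) = 0) (c : ℝ) :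
    ∑ i, wave (A i) (B i) (α i) (β i) (x i - c * b i) =
      ∑ i, wave (A i) (B i) (α i) (β i) (x i + c * b i) := by
  have hmoments (m : ℕ) :
      ∑ i, waveDeriv (A i) (B i) (α i) (β i) (x i) * b i ^ (2 * m + 1) = 0 := by
    have hg' (i : ι) (s : ℝ) :
        HasDerivAt (fun s => -a i * wave (A i) (B i) (α i) (β i) (x i + s * a i))
        ((b i ^ 2 - k ^ 2) * waveDeriv (A i) (B i) (α i) (β i) (x i + s * a i)) s :=
      ((hasDerivAt_wave_comp _ _ s).const_mul _).congr_deriv (by rw [← hab i]; ring)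
    have := sum_mul_eigenvalue_pow_mul_eq_zero (fun i s => hasDerivAt_waveDeriv_comp _ _ s) hg' h
      m 0
    simp only [zero_mul, add_zero] at this
    rw [← this]
    exact Finset.sum_congr rfl fun i _ => by ring
  rw [← sub_eq_zero, ← Finset.sum_sub_distrib]
  simp_rw [wave_sub_sub_wave_add, mul_assoc, ← Finset.mul_sum]
  simp_rw [mul_comm (sin _), mul_comm c, sum_mul_sin_eq_zero_of_odd_moments hmoments, mul_zero]

theorem hasDerivAt_sum_wave_inner {ι E : Type*} [Fintype ι] [NormedAddCommGroup E]
    [InnerProductSpace ℝ E] (A B α β : ι → ℝ) (ξ : ι → E) (p v : E) (t : ℝ) :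
    HasDerivAt (fun t => ∑ i, wave (A i) (B i) (α i) (β i) (inner ℝ (ξ i) (p + t • v)))
      (∑ i, inner ℝ (ξ i) v * waveDeriv (A i) (B i) (α i) (β i) (inner ℝ (ξ i) (p + t • v))) t := by
  simp only [inner_add_right, inner_smul_right]
  exact HasDerivAt.fun_sum fun i _ => hasDerivAt_wave_comp _ _ t

theorem orthogonal_eq_span_singleton {E : Type*} [NormedAddCommGroup E] [InnerProductSpace ℝ E]
    [FiniteDimensional ℝ E] {K : Submodule ℝ E} (hK : Module.finrank ℝ K + 1 = Module.finrank ℝ E)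
    {ν : E} (hν : ν ≠ 0) (hνK : ν ∈ Kᗮ) : Kᗮ = ℝ ∙ ν := by
  refine (Submodule.eq_of_le_of_finrank_eq
    ((Submodule.span_singleton_le_iff_mem _ _).2 hνK) ?_).symm
  have := K.finrank_add_finrank_orthogonal
  rw [finrank_span_singleton hν]
  omega

theorem exists_eq_smul_vadd_of_orthogonal_eq_span {V P : Type*} [NormedAddCommGroup V]
    [InnerProductSpace ℝ V] [MetricSpace P] [NormedAddTorsor V P] {s : AffineSubspace ℝ P}
    [Nonempty s] [s.direction.HasOrthogonalProjection] {ν : V} (hs : s.directionᗮ = ℝ ∙ ν)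
    (p : P) : ∃ q ∈ s, ∃ c : ℝ, p = c • ν +ᵥ q := by
  have hp := vsub_orthogonalProjection_mem_direction_orthogonal s p
  rw [hs, Submodule.mem_span_singleton] at hp
  obtain ⟨c, hc⟩ := hp
  exact ⟨_, orthogonalProjection_mem p, c, by rw [hc, vsub_vadd]⟩

theorem real_inner_fin_two (x y : EuclideanSpace ℝ (Fin 2)) :
    inner ℝ x y = x 0 * y 0 + x 1 * y 1 := by
  simp [EuclideanSpace.inner_eq_star_dotProduct, dotProduct, Fin.sum_univ_two, mul_comm]

theorem rotation_mem_of_orthogonal_eq_span {K : Submodule ℝ (EuclideanSpace ℝ (Fin 2))}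
    {ν : EuclideanSpace ℝ (Fin 2)} (hK : Kᗮ = ℝ ∙ ν) : !₂[-ν 1, ν 0] ∈ K := by
  rw [← K.orthogonal_orthogonal, hK, Submodule.mem_orthogonal_singleton_iff_inner_right]
  simp only [real_inner_fin_two, Matrix.cons_val_zero, Matrix.cons_val_one]
  ring

end Lame

open Lame

/-- Lamé's theorem, part 2: a finite trigonometric solution of the Helmholtz
equation is symmetric about any affine line along which its normal derivative
vanishes. -/
theorem lame_symmetric
    (n : ℕ) (k : ℝ) (lam mu al be A B : Fin n → ℝ)
    (hk : ∀ i, (lam i) ^ 2 + (mu i) ^ 2 = k ^ 2)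
    (T : EuclideanSpace ℝ (Fin 2) → ℝ)
    (hT : ∀ p, T p = ∑ i, (A i * Real.sin (lam i * p 0 + mu i * p 1 + al i) +
                            B i * Real.cos (lam i * p 0 + mu i * p 1 + be i)))
    (L : AffineSubspace ℝ (EuclideanSpace ℝ (Fin 2))) [Nonempty L]
    (hline : Module.finrank ℝ L.direction = 1)
    (ν : EuclideanSpace ℝ (Fin 2)) (hν : ‖ν‖ = 1) (hνL : ν ∈ L.directionᗮ)
    (hnormal : ∀ p ∈ L, deriv (fun t : ℝ => T (p + t • ν)) 0 = 0) :
    ∀ p, T (EuclideanGeometry.reflection L p) = T p := by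
  intro p
  set ξ : Fin n → EuclideanSpace ℝ (Fin 2) := fun i => !₂[lam i, mu i]
  set τ : EuclideanSpace ℝ (Fin 2) := !₂[-ν 1, ν 0]
  have hT' (p) : T p = ∑ i, wave (A i) (B i) (al i) (be i) (inner ℝ (ξ i) p) := by
    simp [hT, ξ, wave, real_inner_fin_two]
  have hν2 : ν 0 ^ 2 + ν 1 ^ 2 = 1 := by
    have h := real_inner_self_eq_norm_sq ν
    rw [hν, real_inner_fin_two] at h
    linear_combination h
  have hspan : L.directionᗮ = ℝ ∙ ν :=
    orthogonal_eq_span_singleton (by rw [hline, finrank_euclideanSpace_fin])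
      (norm_ne_zero_iff.1 (by rw [hν]; exact one_ne_zero)) hνL
  have hab (i) : inner ℝ (ξ i) τ ^ 2 + inner ℝ (ξ i) ν ^ 2 = k ^ 2 := by
    simp only [ξ, τ, real_inner_fin_two, Matrix.cons_val_zero, Matrix.cons_val_one]
    linear_combination (ν 0 ^ 2 + ν 1 ^ 2) * hk i + k ^ 2 * hν2
  obtain ⟨q, hq, c, rfl⟩ := exists_eq_smul_vadd_of_orthogonal_eq_span hspan p
  have hflux (s : ℝ) : ∑ i, inner ℝ (ξ i) ν *
      waveDeriv (A i) (B i) (al i) (be i) (inner ℝ (ξ i) q + s * inner ℝ (ξ i) τ) = 0 := by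
    have := hnormal (s • τ +ᵥ q) (AffineSubspace.vadd_mem_of_mem_direction
      (L.direction.smul_mem s (rotation_mem_of_orthogonal_eq_span hspan)) hq)
    simp only [hT'] at this
    rw [(hasDerivAt_sum_wave_inner A B al be ξ _ ν 0).deriv] at this
    simpa [inner_add_right, inner_smul_right, add_comm] using this
  rw [reflection_orthogonal_vadd hq (Submodule.smul_mem _ c hνL)]
  simp only [hT', vadd_eq_add, inner_add_right, inner_neg_right, inner_smul_right]
  convert sum_wave_sub_eq_sum_wave_add hab hflux c using 3 <;> ring
end

section
/- Define S : ℝ² → ℝ² by S(x,y) = ( (6x - 2√3 y + √3 - 3)/4 , (2√3 x + 6y - √3 - 3)/4 ). Let k ∈ ℝ and let f : ℝ² → ℝ be a C² function satisfying the Helmholtz equation with scalar k². Then g = f ∘ S is a C² function satisfying the Helmholtz equation with scalar 3k², i.e. ∂²g/∂x² + ∂²g/∂y² + 3k² g = 0 at every point of ℝ². -/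
open Real

/-- The partial derivative of `f : ℝ × ℝ → ℝ` in the first coordinate. -/
noncomputable def pdx (f : ℝ × ℝ → ℝ) (p : ℝ × ℝ) : ℝ :=
  deriv (fun t => f (t, p.2)) p.1

/-- The partial derivative of `f : ℝ × ℝ → ℝ` in the second coordinate. -/
noncomputable def pdy (f : ℝ × ℝ → ℝ) (p : ℝ × ℝ) : ℝ :=
  deriv (fun t => f (p.1, t)) p.2

/-- `f` satisfies the Helmholtz equation with scalar `c`. -/
def IsHelmholtzScalar (c : ℝ) (f : ℝ × ℝ → ℝ) : Prop :=
  ∀ p : ℝ × ℝ, pdx (pdx f) p + pdy (pdy f) p + c * f p = 0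

/-! The linear part of `S` is `√3` times a rotation by `π / 6`, i.e. multiplication by the
complex number `3 / 2 + (√3 / 2) i`. Precomposing with `x ↦ A x + d` turns the Hessian `D²f` into
`D²f (A x + d) (A ·) (A ·)`, and for `A` multiplication by `a + b i` the images `(a, b)`, `(-b, a)`
of the standard basis are orthogonal of squared length `a² + b²`. Hence the Laplacian of the
composite is `a² + b² = 3` times the Laplacian of `f` at the image point, which equals
`-k² f` there. -/

theorem fderiv_fderiv_apply {𝕜 E F : Type*} [NontriviallyNormedField 𝕜]
    [NormedAddCommGroup E] [NormedSpace 𝕜 E] [NormedAddCommGroup F] [NormedSpace 𝕜 F]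
    {u : E → F} {p : E} (hu : DifferentiableAt 𝕜 (fderiv 𝕜 u) p) (v w : E) :
    fderiv 𝕜 (fun x => fderiv 𝕜 u x w) p v = fderiv 𝕜 (fderiv 𝕜 u) p v w := by
  simp [fderiv_clm_apply hu (differentiableAt_const w)]

section PartialDerivatives

variable {u : ℝ × ℝ → ℝ}

theorem pdx_eq_fderiv {p : ℝ × ℝ} (hu : DifferentiableAt ℝ u p) :
    pdx u p = fderiv ℝ u p (1, 0) := by
  have hline : HasDerivAt (fun t : ℝ => (t, p.2)) (1, 0) p.1 :=
    (hasDerivAt_id p.1).prodMk (hasDerivAt_const p.1 p.2)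
  exact (hu.hasFDerivAt.comp_hasDerivAt p.1 hline).deriv

theorem pdy_eq_fderiv {p : ℝ × ℝ} (hu : DifferentiableAt ℝ u p) :
    pdy u p = fderiv ℝ u p (0, 1) := by
  have hline : HasDerivAt (fun t : ℝ => (p.1, t)) (0, 1) p.2 :=
    (hasDerivAt_const p.2 p.1).prodMk (hasDerivAt_id p.2)
  exact (hu.hasFDerivAt.comp_hasDerivAt p.2 hline).deriv

theorem pdx_pdx_eq_fderiv_fderiv (hu : ContDiff ℝ 2 u) (p : ℝ × ℝ) :
    pdx (pdx u) p = fderiv ℝ (fderiv ℝ u) p (1, 0) (1, 0) := by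
  have hd : Differentiable ℝ (fderiv ℝ u) := (hu.fderiv_right le_rfl).differentiable one_ne_zero
  have hpdx : pdx u = fun w => fderiv ℝ u w (1, 0) :=
    funext fun w => pdx_eq_fderiv ((hu.differentiable two_ne_zero) w)
  rw [hpdx, pdx_eq_fderiv ((hd p).clm_apply (differentiableAt_const _)),
    fderiv_fderiv_apply (hd p)]

theorem pdy_pdy_eq_fderiv_fderiv (hu : ContDiff ℝ 2 u) (p : ℝ × ℝ) :
    pdy (pdy u) p = fderiv ℝ (fderiv ℝ u) p (0, 1) (0, 1) := by
  have hd : Differentiable ℝ (fderiv ℝ u) := (hu.fderiv_right le_rfl).differentiable one_ne_zero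
  have hpdy : pdy u = fun w => fderiv ℝ u w (0, 1) :=
    funext fun w => pdy_eq_fderiv ((hu.differentiable two_ne_zero) w)
  rw [hpdy, pdy_eq_fderiv ((hd p).clm_apply (differentiableAt_const _)),
    fderiv_fderiv_apply (hd p)]

theorem isHelmholtzScalar_iff {c : ℝ} (hu : ContDiff ℝ 2 u) :
    IsHelmholtzScalar c u ↔ ∀ p, fderiv ℝ (fderiv ℝ u) p (1, 0) (1, 0) +
      fderiv ℝ (fderiv ℝ u) p (0, 1) (0, 1) + c * u p = 0 := by
  simp only [IsHelmholtzScalar, pdx_pdx_eq_fderiv_fderiv hu, pdy_pdy_eq_fderiv_fderiv hu]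

end PartialDerivatives

theorem fderiv_fderiv_comp_add_apply {𝕜 E F G : Type*} [NontriviallyNormedField 𝕜]
    [NormedAddCommGroup E] [NormedSpace 𝕜 E] [NormedAddCommGroup F] [NormedSpace 𝕜 F]
    [NormedAddCommGroup G] [NormedSpace 𝕜 G] {f : F → G} (hf : ContDiff 𝕜 2 f)
    (A : E →L[𝕜] F) (c : F) (x v w : E) :
    fderiv 𝕜 (fderiv 𝕜 fun y => f (A y + c)) x v w =
      fderiv 𝕜 (fderiv 𝕜 f) (A x + c) (A v) (A w) := by
  have hshift : ContDiff 𝕜 2 fun z => f (z + c) := hf.comp (contDiff_id.add contDiff_const)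
  have h := A.iteratedFDeriv_comp_right hshift x le_rfl
  rw [iteratedFDeriv_comp_add_right] at h
  simpa [iteratedFDeriv_two_apply, Function.comp_def] using congrArg (fun L => L ![v, w]) h

/-- Multiplication by `a + b i`, with `ℝ × ℝ` read as `ℂ`. -/
noncomputable def rotScale (a b : ℝ) : ℝ × ℝ →L[ℝ] ℝ × ℝ :=
  (a • ContinuousLinearMap.fst ℝ ℝ ℝ - b • ContinuousLinearMap.snd ℝ ℝ ℝ).prod
    (b • ContinuousLinearMap.fst ℝ ℝ ℝ + a • ContinuousLinearMap.snd ℝ ℝ ℝ)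

theorem rotScale_apply (a b : ℝ) (v : ℝ × ℝ) :
    rotScale a b v = (a * v.1 - b * v.2, b * v.1 + a * v.2) := by
  simp [rotScale]

theorem rotScale_one_zero (a b : ℝ) : rotScale a b (1, 0) = (a, b) := by
  simp [rotScale_apply]

theorem rotScale_zero_one (a b : ℝ) : rotScale a b (0, 1) = (-b, a) := by
  simp [rotScale_apply]

theorem apply_add_apply_rotate (B : ℝ × ℝ →L[ℝ] ℝ × ℝ →L[ℝ] ℝ) (a b : ℝ) :
    B (a, b) (a, b) + B (-b, a) (-b, a) =
      (a ^ 2 + b ^ 2) * (B (1, 0) (1, 0) + B (0, 1) (0, 1)) := by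
  have hdecomp : ∀ x y : ℝ, ((x, y) : ℝ × ℝ) = x • (1, 0) + y • (0, 1) := by simp
  rw [hdecomp a b, hdecomp (-b) a]
  simp only [map_add, map_smul, add_apply, smul_apply, smul_eq_mul]
  ring

theorem IsHelmholtzScalar.comp_rotScale_add {c : ℝ} {f : ℝ × ℝ → ℝ} (hf : ContDiff ℝ 2 f)
    (hH : IsHelmholtzScalar c f) (a b : ℝ) (d : ℝ × ℝ) :
    IsHelmholtzScalar ((a ^ 2 + b ^ 2) * c) fun v => f (rotScale a b v + d) := by
  have hg : ContDiff ℝ 2 fun v => f (rotScale a b v + d) :=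
    hf.comp ((rotScale a b).contDiff.add contDiff_const)
  rw [isHelmholtzScalar_iff hf] at hH
  rw [isHelmholtzScalar_iff hg]
  intro p
  rw [fderiv_fderiv_comp_add_apply hf, fderiv_fderiv_comp_add_apply hf, rotScale_one_zero, rotScale_zero_one, apply_add_apply_rotate]
  linear_combination (a ^ 2 + b ^ 2) * hH (rotScale a b p + d)

/-- Composing a solution of the Helmholtz equation with scalar `k²` with the
affine tessellation map `S` yields a solution with scalar `3k²`. -/
theorem helmholtz_triple_scalar
    (S : ℝ × ℝ → ℝ × ℝ)
    (hS : ∀ v : ℝ × ℝ, S v =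
      ((6 * v.1 - 2 * Real.sqrt 3 * v.2 + Real.sqrt 3 - 3) / 4,
       (2 * Real.sqrt 3 * v.1 + 6 * v.2 - Real.sqrt 3 - 3) / 4))
    (k : ℝ) (f : ℝ × ℝ → ℝ) (hf : ContDiff ℝ 2 f)
    (hH : IsHelmholtzScalar (k ^ 2) f) :
    ContDiff ℝ 2 (f ∘ S) ∧ IsHelmholtzScalar (3 * k ^ 2) (f ∘ S) := by
  have hS_affine : S = fun v => rotScale (3 / 2) (√3 / 2) v + ((√3 - 3) / 4, -(√3 + 3) / 4) := by
    funext v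
    rw [hS, rotScale_apply]
    ext <;> simp only [Prod.fst_add, Prod.snd_add] <;> ring
  have hscale : (3 : ℝ) = (3 / 2) ^ 2 + (√3 / 2) ^ 2 := by
    rw [div_pow, div_pow, sq_sqrt zero_le_three]; norm_num
  subst hS_affine
  refine ⟨hf.comp ((rotScale _ _).contDiff.add contDiff_const), ?_⟩
  have h := hH.comp_rotScale_add hf (3 / 2) (√3 / 2) ((√3 - 3) / 4, -(√3 + 3) / 4)
  rwa [← hscale] at h
end

section
/- Let ℓ > 0, let n be a positive integer, set k_n = 4πn/(3ℓ), and define f_n : ℝ² → ℝ by f_n(x,y) = sin(k_n(x + ℓ/2)) + 2(-1)^{n+1} sin((k_n/2)(x + ℓ/2)) cos((√3 k_n/2) y). Let R be the rotation of ℝ² by 120° counterclockwise about the origin and M the reflection M(x,y) = (x,-y). Then f_n(R v) = f_n(v) and f_n(M v) = f_n(v) for every v ∈ ℝ². (The ground state and its harmonics belong to symmetry class A1: they are symmetric under rotation and under reflection.) -/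
/-!
With `α = 2πn/3 = kₙℓ/2`, the product-to-sum formula and `sin (nπ - s) = (-1)^(n+1) sin s`
rewrite `fₙ` as a sum of three plane waves `Σⱼ sin (kₙ ⟨eⱼ, v⟩ + α)`, where `e₀, e₁, e₂` are
the unit vectors at angles `0°, 120°, 240°`. The rotation `R` permutes the `eⱼ` cyclically and
the reflection `M` fixes `e₀` and swaps `e₁, e₂`, so the sum is invariant under both.
-/

open Real

noncomputable def threeWaveSum (k α : ℝ) (v : ℝ × ℝ) : ℝ :=
  sin (k * v.1 + α) + sin (k * ((-v.1 + √3 * v.2) / 2) + α) +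
    sin (k * ((-v.1 - √3 * v.2) / 2) + α)

theorem threeWaveSum_rotate (k α x y : ℝ) :
    threeWaveSum k α (-(1 / 2) * x - (√3 / 2) * y, (√3 / 2) * x - (1 / 2) * y) =
      threeWaveSum k α (x, y) := by
  have h3 : √3 * √3 = 3 := mul_self_sqrt (by norm_num)
  have hb : (-(-(1 / 2) * x - √3 / 2 * y) + √3 * (√3 / 2 * x - 1 / 2 * y)) / 2 = x := by
    linear_combination (x / 4) * h3
  have hc : (-(-(1 / 2) * x - √3 / 2 * y) - √3 * (√3 / 2 * x - 1 / 2 * y)) / 2 =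
      (-x + √3 * y) / 2 := by
    linear_combination (-x / 4) * h3
  simp only [threeWaveSum, hb, hc]
  ring_nf

theorem threeWaveSum_reflect (k α x y : ℝ) :
    threeWaveSum k α (x, -y) = threeWaveSum k α (x, y) := by
  simp only [threeWaveSum, mul_neg, sub_neg_eq_add, ← sub_eq_add_neg]
  ring

theorem neg_one_pow_succ_mul_sin_sub (n : ℕ) (t : ℝ) :
    (-1 : ℝ) ^ (n + 1) * sin (n * π / 3 - t) = sin (t + 2 * n * π / 3) := by
  have hphase : t + 2 * n * π / 3 = n * π - (n * π / 3 - t) := by ring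
  rw [hphase, sin_nat_mul_pi_sub, pow_succ]
  ring

theorem sin_add_two_mul_sin_mul_cos_eq_threeWaveSum (ℓ k : ℝ) (n : ℕ)
    (hk : k * ℓ = 4 * π * n / 3) (x y : ℝ) :
    sin (k * (x + ℓ / 2)) +
        2 * (-1 : ℝ) ^ (n + 1) * sin ((k / 2) * (x + ℓ / 2)) * cos ((√3 * k / 2) * y) =
      threeWaveSum k (2 * n * π / 3) (x, y) := by
  have ha : k * (x + ℓ / 2) = k * x + 2 * n * π / 3 := by linear_combination hk / 2
  have hθ : k / 2 * (x + ℓ / 2) = n * π / 3 + k * x / 2 := by linear_combination hk / 4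
  have hφ : √3 * k / 2 * y = k * (√3 * y) / 2 := by ring
  have hb : n * π / 3 - k * ((-x + √3 * y) / 2) =
      n * π / 3 + k * x / 2 - k * (√3 * y) / 2 := by
    ring
  have hc : n * π / 3 - k * ((-x - √3 * y) / 2) =
      n * π / 3 + k * x / 2 + k * (√3 * y) / 2 := by
    ring
  simp only [threeWaveSum, ← neg_one_pow_succ_mul_sin_sub, ha, hθ, hφ, hb, hc]
  linear_combination
    (-1 : ℝ) ^ (n + 1) * two_mul_sin_mul_cos (n * π / 3 + k * x / 2) (k * (√3 * y) / 2)

theorem ground_state_symmetry_A1_general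
    (ℓ : ℝ) (hℓ : 0 < ℓ) (n : ℕ)
    (kn : ℝ) (hkn : kn = 4 * Real.pi * n / (3 * ℓ))
    (f : ℝ × ℝ → ℝ)
    (hf : ∀ x y : ℝ, f (x, y) =
      Real.sin (kn * (x + ℓ / 2)) +
        2 * (-1 : ℝ) ^ (n + 1) * Real.sin ((kn / 2) * (x + ℓ / 2)) *
          Real.cos ((Real.sqrt 3 * kn / 2) * y))
    (R : ℝ × ℝ → ℝ × ℝ)
    (hR : ∀ v : ℝ × ℝ, R v = (-(1 / 2) * v.1 - (Real.sqrt 3 / 2) * v.2,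
                               (Real.sqrt 3 / 2) * v.1 - (1 / 2) * v.2))
    (M : ℝ × ℝ → ℝ × ℝ) (hM : ∀ v : ℝ × ℝ, M v = (v.1, -v.2)) :
    (∀ v : ℝ × ℝ, f (R v) = f v) ∧ (∀ v : ℝ × ℝ, f (M v) = f v) := by
  have hk : kn * ℓ = 4 * π * n / 3 := by
    rw [hkn]
    field_simp
  have hf_eq : ∀ x y, f (x, y) = threeWaveSum kn (2 * n * π / 3) (x, y) := fun x y => by
    rw [hf, sin_add_two_mul_sin_mul_cos_eq_threeWaveSum ℓ kn n hk]
  refine ⟨fun ⟨x, y⟩ => ?_, fun ⟨x, y⟩ => ?_⟩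
  · rw [hR, hf_eq, hf_eq, threeWaveSum_rotate]
  · rw [hM, hf_eq, hf_eq, threeWaveSum_reflect]

/-- The ground state solution and its harmonics are in symmetry class A1: they
are invariant under the rotation by 120° and under reflection in the x-axis. -/
theorem ground_state_symmetry_A1
    (ℓ : ℝ) (hℓ : 0 < ℓ) (n : ℕ) (hn : 0 < n)
    (kn : ℝ) (hkn : kn = 4 * Real.pi * n / (3 * ℓ))
    (f : ℝ × ℝ → ℝ)
    (hf : ∀ x y : ℝ, f (x, y) =
      Real.sin (kn * (x + ℓ / 2)) +
        2 * (-1 : ℝ) ^ (n + 1) * Real.sin ((kn / 2) * (x + ℓ / 2)) *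
          Real.cos ((Real.sqrt 3 * kn / 2) * y))
    (R : ℝ × ℝ → ℝ × ℝ)
    (hR : ∀ v : ℝ × ℝ, R v = (-(1 / 2) * v.1 - (Real.sqrt 3 / 2) * v.2,
                               (Real.sqrt 3 / 2) * v.1 - (1 / 2) * v.2))
    (M : ℝ × ℝ → ℝ × ℝ) (hM : ∀ v : ℝ × ℝ, M v = (v.1, -v.2)) :
    (∀ v : ℝ × ℝ, f (R v) = f v) ∧ (∀ v : ℝ × ℝ, f (M v) = f v) :=
  ground_state_symmetry_A1_general ℓ hℓ n kn hkn f hf R hR M hM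
end

section
/- Let k ≠ 0 be a real number and let f : ℝ² → ℝ be a smooth function that is even in y (f(x,-y) = f(x,y) for all (x,y)), satisfies the Helmholtz equation with scalar k², and satisfies 4 ∂³f/∂y³ + 3k² ∂f/∂y = 0 at every point of ℝ². Then there exist smooth functions a, b : ℝ → ℝ with a'' + k² a = 0 and b'' + (k²/4) b = 0 such that f(x,y) = a(x) + b(x) cos((√3 k/2) y) for all (x,y) ∈ ℝ². (Separation structure of even solutions annihilated by the differential operator.) -/
open Real

lemma pdy_contDiff (f : ℝ × ℝ → ℝ) (hf : ContDiff ℝ (⊤ : ℕ∞) f) : ContDiff ℝ (⊤ : ℕ∞) (pdy f) := by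
  have h1 : pdy f = fun p => fderiv ℝ f p ((0 : ℝ), (1 : ℝ)) := by
    funext p
    have h' : HasDerivAt (fun t : ℝ => ((p.1 : ℝ), t)) ((0:ℝ),(1:ℝ)) p.2 :=
      (hasDerivAt_const _ _).prodMk (hasDerivAt_id _)
    have hd : HasDerivAt (fun t => f (p.1, t)) (fderiv ℝ f (p.1, p.2) ((0:ℝ),(1:ℝ))) p.2 :=
      (hf.differentiable (by simp) (p.1, p.2)).hasFDerivAt.comp_hasDerivAt p.2 h'
    simpa [pdy] using hd.deriv
  rw [h1]
  exact (hf.fderiv_right (by simp)).clm_apply contDiff_const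

lemma pdx_contDiff (f : ℝ × ℝ → ℝ) (hf : ContDiff ℝ (⊤ : ℕ∞) f) : ContDiff ℝ (⊤ : ℕ∞) (pdx f) := by
  have h1 : pdx f = fun p => fderiv ℝ f p ((1 : ℝ), (0 : ℝ)) := by
    funext p
    have h' : HasDerivAt (fun t : ℝ => (t, (p.2 : ℝ))) ((1:ℝ),(0:ℝ)) p.1 :=
      (hasDerivAt_id _).prodMk (hasDerivAt_const _ _)
    have hd : HasDerivAt (fun t => f (t, p.2)) (fderiv ℝ f (p.1, p.2) ((1:ℝ),(0:ℝ))) p.1 :=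
      (hf.differentiable (by simp) (p.1, p.2)).hasFDerivAt.comp_hasDerivAt p.1 h'
    simpa [pdx] using hd.deriv
  rw [h1]
  exact (hf.fderiv_right (by simp)).clm_apply contDiff_const

lemma energy_zero (ω : ℝ) (hω : ω ≠ 0) (u : ℝ → ℝ)
    (h1 : Differentiable ℝ u) (h2 : Differentiable ℝ (deriv u))
    (hode : ∀ y, deriv (deriv u) y = -(ω^2) * u y)
    (h0 : u 0 = 0) (h0' : deriv u 0 = 0) : ∀ y, u y = 0 := by
  set E : ℝ → ℝ := fun y => (deriv u y)^2 + ω^2 * (u y)^2 with hE_def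
  have hE : ∀ y, HasDerivAt E 0 y := by
    intro y
    have d1 : HasDerivAt u (deriv u y) y := (h1 y).hasDerivAt
    have d2 : HasDerivAt (deriv u) (deriv (deriv u) y) y := (h2 y).hasDerivAt
    have t1 : HasDerivAt (fun y => (deriv u y)^2)
        ((2:ℕ) * (deriv u y)^1 * deriv (deriv u) y) y := d2.pow 2
    have t2 : HasDerivAt (fun y => ω^2 * (u y)^2)
        (ω^2 * ((2:ℕ) * (u y)^1 * deriv u y)) y := (d1.pow 2).const_mul _
    have := t1.add t2
    refine this.congr_deriv ?_
    rw [hode y]; ring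
  have hconst : ∀ y, E y = E 0 :=
    fun y => is_const_of_deriv_eq_zero (fun z => (hE z).differentiableAt) (fun z => (hE z).deriv) y 0
  intro y
  have h3 : E y = 0 := by
    rw [hconst y]; simp [hE_def, h0, h0']
  have h4 : (deriv u y)^2 + ω^2 * (u y)^2 = 0 := h3
  have hω2 : 0 < ω^2 := by positivity
  have h5 : (u y)^2 = 0 := by nlinarith [sq_nonneg (deriv u y), mul_nonneg hω2.le (sq_nonneg (u y))]
  exact pow_eq_zero_iff (two_ne_zero) |>.mp h5


/-- Separation structure of smooth even solutions of the Helmholtz equation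
annihilated by the operator `4 ∂³/∂y³ + 3k² ∂/∂y`:
they have the form `f(x,y) = a(x) + b(x) cos((√3 k/2) y)`. -/
theorem separation_structure
    (k : ℝ) (hk : k ≠ 0)
    (f : ℝ × ℝ → ℝ) (hf : ContDiff ℝ (⊤ : ℕ∞) f)
    (heven : ∀ x y : ℝ, f (x, -y) = f (x, y))
    (hH : ∀ p : ℝ × ℝ, pdx (pdx f) p + pdy (pdy f) p + k ^ 2 * f p = 0)
    (hann : ∀ p : ℝ × ℝ, 4 * pdy (pdy (pdy f)) p + 3 * k ^ 2 * pdy f p = 0) :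
    ∃ a b : ℝ → ℝ, ContDiff ℝ (⊤ : ℕ∞) a ∧ ContDiff ℝ (⊤ : ℕ∞) b ∧
      (∀ x : ℝ, deriv (deriv a) x + k ^ 2 * a x = 0) ∧
      (∀ x : ℝ, deriv (deriv b) x + (k ^ 2 / 4) * b x = 0) ∧
      (∀ x y : ℝ, f (x, y) = a x + b x * Real.cos ((Real.sqrt 3 * k / 2) * y)) := by
  have hs3 : (0:ℝ) < Real.sqrt 3 := Real.sqrt_pos.mpr (by norm_num)
  set ω : ℝ := Real.sqrt 3 * k / 2 with hω_def
  have hω : ω ≠ 0 := div_ne_zero (mul_ne_zero hs3.ne' hk) two_ne_zero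
  have h1le : (1 : WithTop ℕ∞) ≤ ((⊤ : ℕ∞) : WithTop ℕ∞) := by exact_mod_cast le_top
  have h3 : (Real.sqrt 3) ^ 2 = 3 := Real.sq_sqrt (by norm_num)
  have hω2 : ω ^ 2 = 3 * k ^ 2 / 4 := by
    rw [hω_def, div_pow, mul_pow, h3]; norm_num
  have hfy := pdy_contDiff f hf
  have hfyy := pdy_contDiff _ hfy
  set b : ℝ → ℝ := fun x => -(pdy (pdy f) (x, 0)) / ω ^ 2 with hb_def
  set a : ℝ → ℝ := fun x => f (x, 0) - b x with ha_def
  have hbord : ContDiff ℝ (⊤ : ℕ∞) (fun x : ℝ => (x, (0:ℝ))) := contDiff_id.prodMk contDiff_const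
  have hb_smooth : ContDiff ℝ (⊤ : ℕ∞) b := ((hfyy.comp hbord).neg).div_const _
  have ha_smooth : ContDiff ℝ (⊤ : ℕ∞) a := (hf.comp hbord).sub hb_smooth
  -- key pointwise formula
  have key : ∀ x y : ℝ, f (x, y) = a x + b x * Real.cos (ω * y) := by
    intro x y
    set g : ℝ → ℝ := fun t => f (x, t) with hg_def
    have hg : ContDiff ℝ ((⊤ : ℕ∞) : WithTop ℕ∞) g :=
      (hf.of_le (by simp)).comp (contDiff_const.prodMk contDiff_id)
    have hg1 : ContDiff ℝ ((⊤ : ℕ∞) : WithTop ℕ∞) (deriv g) := (contDiff_infty_iff_deriv.mp hg).2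
    have hg2 : ContDiff ℝ ((⊤ : ℕ∞) : WithTop ℕ∞) (deriv (deriv g)) := (contDiff_infty_iff_deriv.mp hg1).2
    have hpdy : ∀ t, pdy f (x, t) = deriv g t := fun t => rfl
    have hpdyy : ∀ t, pdy (pdy f) (x, t) = deriv (deriv g) t := fun t => rfl
    have hpdyyy : ∀ t, pdy (pdy (pdy f)) (x, t) = deriv (deriv (deriv g)) t := fun t => rfl
    have hodeg : ∀ t, deriv (deriv (deriv g)) t = -(ω ^ 2) * deriv g t := by
      intro t
      have h := hann (x, t)
      rw [hpdyyy t, hpdy t] at h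
      rw [hω2]; linarith
    have hg0 : deriv g 0 = 0 := by
      have h1 : deriv (fun t => g (-t)) 0 = -deriv g 0 := by
        rw [deriv_comp_neg]; simp
      have h2 : (fun t => g (-t)) = g := funext fun t => heven x t
      rw [h2] at h1; linarith
    set c : ℝ := b x with hc_def
    have hc : c = -(deriv (deriv g) 0) / ω ^ 2 := by
      rw [hc_def, hb_def]; simp only []; rw [hpdyy 0]
    set u : ℝ → ℝ := fun t => deriv g t + c * ω * Real.sin (ω * t) with hu_def
    have hsin : ∀ t, HasDerivAt (fun t => c * ω * Real.sin (ω * t))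
        (c * ω ^ 2 * Real.cos (ω * t)) t := by
      intro t
      have h := ((Real.hasDerivAt_sin (ω * t)).comp t ((hasDerivAt_id t).const_mul ω)).const_mul (c * ω)
      refine h.congr_deriv ?_; ring
    have hcos : ∀ t (d : ℝ), HasDerivAt (fun t => d * Real.cos (ω * t))
        (-(d * ω * Real.sin (ω * t))) t := by
      intro t d
      have h := ((Real.hasDerivAt_cos (ω * t)).comp t ((hasDerivAt_id t).const_mul ω)).const_mul d
      refine h.congr_deriv ?_; ring
    have hu' : ∀ t, HasDerivAt u (deriv (deriv g) t + c * ω ^ 2 * Real.cos (ω * t)) t :=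
      fun t => ((hg1.differentiable (by simp) t).hasDerivAt).add (hsin t)
    have hderivu : deriv u = fun t => deriv (deriv g) t + c * ω ^ 2 * Real.cos (ω * t) :=
      funext fun t => (hu' t).deriv
    have hu'' : ∀ t, HasDerivAt (deriv u)
        (deriv (deriv (deriv g)) t + -(c * ω ^ 2 * ω * Real.sin (ω * t))) t := by
      intro t; rw [hderivu]
      have := ((hg2.differentiable (by simp) t).hasDerivAt).add (hcos t (c * ω ^ 2))
      exact this.congr_deriv rfl
    have hodeu : ∀ t, deriv (deriv u) t = -(ω ^ 2) * u t := by
      intro t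
      rw [(hu'' t).deriv, hodeg t, hu_def]; ring
    have hu0 : u 0 = 0 := by simp [hu_def, hg0]
    have hu0' : deriv u 0 = 0 := by
      rw [hderivu]; simp only [mul_zero, Real.cos_zero, mul_one]
      rw [hc]; field_simp; ring
    have huz : ∀ t, u t = 0 :=
      energy_zero ω hω u (fun t => (hu' t).differentiableAt)
        (fun t => (hu'' t).differentiableAt) hodeu hu0 hu0'
    have hφ : ∀ t, HasDerivAt (fun t => g t - c * Real.cos (ω * t)) 0 t := by
      intro t
      have h := ((hg.differentiable (by simp) t).hasDerivAt).sub (hcos t c)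
      have h2 := huz t
      rw [hu_def] at h2
      refine h.congr_deriv ?_
      simp only [] at h2 ⊢
      linarith
    have hconst : g y - c * Real.cos (ω * y) = g 0 - c * Real.cos (ω * 0) :=
      is_const_of_deriv_eq_zero (fun t => (hφ t).differentiableAt)
        (fun t => (hφ t).deriv) y 0
    have : f (x, y) = g y := rfl
    rw [this]
    have ha : a x = g 0 - c := rfl
    rw [ha]
    simp only [mul_zero, Real.cos_zero, mul_one] at hconst
    linarith
  -- smoothness facts for a and b derivatives
  have ha1 : Differentiable ℝ (deriv a) :=
    ((contDiff_infty_iff_deriv.mp (ha_smooth.of_le (by simp))).2).differentiable (by simp)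
  have hb1 : Differentiable ℝ (deriv b) :=
    ((contDiff_infty_iff_deriv.mp (hb_smooth.of_le (by simp))).2).differentiable (by simp)
  -- derivative of combinations
  have hax : ∀ (p q : ℝ → ℝ), Differentiable ℝ p → Differentiable ℝ q → ∀ (t C : ℝ),
      deriv (fun s => p s + q s * C) t = deriv p t + deriv q t * C := by
    intro p q hp hq t C
    rw [deriv_fun_add (hp.differentiableAt) ((hq.differentiableAt).mul_const C),
      deriv_mul_const (hq.differentiableAt)]
  -- the Helmholtz identity in separated form
  have hHid : ∀ x y : ℝ,
      (deriv (deriv a) x + deriv (deriv b) x * Real.cos (ω * y))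
      + (-(b x * ω ^ 2 * Real.cos (ω * y)))
      + k ^ 2 * (a x + b x * Real.cos (ω * y)) = 0 := by
    intro x y
    have hpdx1 : ∀ t, pdx f (t, y) = deriv a t + deriv b t * Real.cos (ω * y) := by
      intro t
      show deriv (fun s => f (s, y)) t = _
      have he : (fun s => f (s, y)) = fun s => a s + b s * Real.cos (ω * y) :=
        funext fun s => key s y
      rw [he, hax a b (ha_smooth.differentiable (by simp)) (hb_smooth.differentiable (by simp))]
    have hpdxx : pdx (pdx f) (x, y)
        = deriv (deriv a) x + deriv (deriv b) x * Real.cos (ω * y) := by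
      show deriv (fun t => pdx f (t, y)) x = _
      have he : (fun t => pdx f (t, y))
          = fun t => deriv a t + deriv b t * Real.cos (ω * y) := funext hpdx1
      rw [he, hax (deriv a) (deriv b) ha1 hb1]
    have hcos : ∀ t (d : ℝ), HasDerivAt (fun t => d * Real.cos (ω * t))
        (-(d * ω * Real.sin (ω * t))) t := by
      intro t d
      have h := ((Real.hasDerivAt_cos (ω * t)).comp t ((hasDerivAt_id t).const_mul ω)).const_mul d
      refine h.congr_deriv ?_; ring
    have hsin : ∀ t (d : ℝ), HasDerivAt (fun t => -(d * ω * Real.sin (ω * t)))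
        (-(d * ω ^ 2 * Real.cos (ω * t))) t := by
      intro t d
      have h := (((Real.hasDerivAt_sin (ω * t)).comp t
        ((hasDerivAt_id t).const_mul ω)).const_mul (d * ω)).neg
      refine h.congr_deriv ?_; ring
    have hpdyy2 : pdy (pdy f) (x, y) = -(b x * ω ^ 2 * Real.cos (ω * y)) := by
      show deriv (fun t => pdy f (x, t)) y = _
      have he1 : ∀ t, pdy f (x, t) = -(b x * ω * Real.sin (ω * t)) := by
        intro t
        show deriv (fun s => f (x, s)) t = _
        have he : (fun s => f (x, s)) = fun s => a x + b x * Real.cos (ω * s) :=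
          funext fun s => key x s
        rw [he]
        exact (((hcos t (b x)).const_add (a x))).deriv
      have he2 : (fun t => pdy f (x, t)) = fun t => -(b x * ω * Real.sin (ω * t)) :=
        funext he1
      rw [he2]
      exact (hsin y (b x)).deriv
    have h := hH (x, y)
    rw [hpdxx, hpdyy2, key x y] at h
    linarith
  refine ⟨a, b, ha_smooth, hb_smooth, ?_, ?_, fun x y => key x y⟩
  · intro x
    have h1 := hHid x 0
    have h2 := hHid x (Real.pi / ω)
    rw [mul_div_cancel₀ _ hω] at h2
    simp only [mul_zero, Real.cos_zero, mul_one, Real.cos_pi] at h1 h2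
    have hsub : b x * ω ^ 2 = b x * (3 * k ^ 2 / 4) := by rw [hω2]
    linarith
  · intro x
    have h1 := hHid x 0
    have h2 := hHid x (Real.pi / ω)
    rw [mul_div_cancel₀ _ hω] at h2
    simp only [mul_zero, Real.cos_zero, mul_one, Real.cos_pi] at h1 h2
    have hsub : b x * ω ^ 2 = b x * (3 * k ^ 2 / 4) := by rw [hω2]
    linarith
end

section
/- Let ℓ > 0 and k > 0, and let f : ℝ² → ℝ be a smooth function, even in y (f(x,-y) = f(x,y) for all (x,y)), satisfying the Helmholtz equation with scalar k² and 4 ∂³f/∂y³ + 3k² ∂f/∂y = 0 at every point of ℝ², vanishing identically on the lines x = -ℓ/2 and y = (ℓ-x)/√3 (i.e. f(-ℓ/2, y) = 0 for all y and f(x, (ℓ-x)/√3) = 0 for all x), and not identically zero. Then there exist a positive integer n and a real number A ≠ 0 such that k = 4πn/(3ℓ) and f(x,y) = A ( sin(k(x + ℓ/2)) + 2(-1)^{n+1} sin((k/2)(x + ℓ/2)) cos((√3 k/2) y) ) for all (x,y) ∈ ℝ². (Any solution in symmetry class A1 annihilated by the differential operator is the ground state of the equilateral triangle or one of its harmonics.)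 -/
open Real

section Aux

open scoped ContDiff

private lemma osc (om : ℝ) (hom : 0 < om) (g g' : ℝ → ℝ)
    (hg : ∀ t, HasDerivAt g (g' t) t)
    (hg' : ∀ t, HasDerivAt g' (-(om^2) * g t) t) (t₀ : ℝ) (t : ℝ) :
    g t = g t₀ * Real.cos (om*(t-t₀)) + (g' t₀ / om) * Real.sin (om*(t-t₀)) := by
  set a := g t₀ with ha
  set b := g' t₀ / om with hb
  have hφ : ∀ s, HasDerivAt (fun u => a * Real.cos (om*(u-t₀)) + b * Real.sin (om*(u-t₀)))
      (-(a*om) * Real.sin (om*(s-t₀)) + b*om * Real.cos (om*(s-t₀))) s := by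
    intro s
    have h1 : HasDerivAt (fun u : ℝ => om*(u-t₀)) om s := by
      simpa using ((hasDerivAt_id s).sub_const t₀).const_mul om
    have hc := (Real.hasDerivAt_cos (om*(s-t₀))).comp s h1
    have hs := (Real.hasDerivAt_sin (om*(s-t₀))).comp s h1
    have := (hc.const_mul a).add (hs.const_mul b)
    exact this.congr_deriv (by ring)
  have hφ' : ∀ s, HasDerivAt (fun u => -(a*om) * Real.sin (om*(u-t₀)) + b*om * Real.cos (om*(u-t₀)))
      (-(om^2) * (a * Real.cos (om*(s-t₀)) + b * Real.sin (om*(s-t₀)))) s := by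
    intro s
    have h1 : HasDerivAt (fun u : ℝ => om*(u-t₀)) om s := by
      simpa using ((hasDerivAt_id s).sub_const t₀).const_mul om
    have hc := (Real.hasDerivAt_cos (om*(s-t₀))).comp s h1
    have hs := (Real.hasDerivAt_sin (om*(s-t₀))).comp s h1
    have := (hs.const_mul (-(a*om))).add (hc.const_mul (b*om))
    exact this.congr_deriv (by ring)
  set w : ℝ → ℝ := fun s => g s - (a * Real.cos (om*(s-t₀)) + b * Real.sin (om*(s-t₀))) with hw
  set w' : ℝ → ℝ := fun s => g' s - (-(a*om) * Real.sin (om*(s-t₀)) + b*om * Real.cos (om*(s-t₀))) with hw'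
  have hwd : ∀ s, HasDerivAt w (w' s) s := fun s => (hg s).sub (hφ s)
  have hwd' : ∀ s, HasDerivAt w' (-(om^2) * w s) s := by
    intro s
    have := (hg' s).sub (hφ' s)
    exact this.congr_deriv (by simp only [hw]; ring)
  set E : ℝ → ℝ := fun s => om^2 * (w s)^2 + (w' s)^2 with hE
  have hEd : ∀ s, HasDerivAt E 0 s := by
    intro s
    have h1 := (((hwd s).pow 2).const_mul (om^2)).add ((hwd' s).pow 2)
    exact h1.congr_deriv (by push_cast; ring)
  have hEc : ∀ s, E s = E t₀ :=
    fun s => is_const_of_deriv_eq_zero (fun u => (hEd u).differentiableAt)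
      (fun u => (hEd u).deriv) s t₀
  have hw0 : w t₀ = 0 := by simp [hw, ha]
  have hw'0 : w' t₀ = 0 := by
    simp only [hw', hb]
    field_simp
    simp
  have hEt : E t = 0 := by rw [hEc t, hE]; simp [hw0, hw'0]
  have hwt : w t = 0 := by
    simp only [hE] at hEt
    have h1 : (w t)^2 = 0 := by nlinarith [hEt, sq_nonneg (w' t), sq_nonneg (w t), pow_pos hom 2]
    exact pow_eq_zero_iff (by norm_num) |>.mp h1
  have := hwt
  simp only [hw] at this
  linarith

private lemma smooth_deriv' {g : ℝ → ℝ} (hg : ContDiff ℝ ∞ g) : ContDiff ℝ ∞ (deriv g) :=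
  (contDiff_infty_iff_deriv.mp hg).2

private lemma hasd' {g : ℝ → ℝ} (hg : ContDiff ℝ ∞ g) (t : ℝ) : HasDerivAt g (deriv g t) t :=
  (hg.differentiable (by simp) t).hasDerivAt

-- Step A: even solutions of 4g''' + μ² g' = 0 (i.e. g''' = -μ² g')
private lemma stepA (μ : ℝ) (hμ : 0 < μ) (g : ℝ → ℝ) (hg : ContDiff ℝ ∞ g)
    (heven : ∀ y, g (-y) = g y)
    (hode : ∀ t, deriv (deriv (deriv g)) t = -(μ^2) * deriv g t) (y : ℝ) :
    g y = (g 0 + g (π/μ))/2 + (g 0 - g (π/μ))/2 * Real.cos (μ * y) := by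
  have hμ' : μ ≠ 0 := ne_of_gt hμ
  set g1 := deriv g with hg1def
  set g2 := deriv g1 with hg2def
  have hg1 : ContDiff ℝ ∞ g1 := smooth_deriv' hg
  have hg2 : ContDiff ℝ ∞ g2 := smooth_deriv' hg1
  -- g1 0 = 0 by evenness
  have h10 : g1 0 = 0 := by
    have hneg : HasDerivAt (fun y : ℝ => g (-y)) (-(g1 0)) 0 := by
      have h1 : HasDerivAt (fun y : ℝ => -y) (-1 : ℝ) 0 := by
        exact (hasDerivAt_id' (0:ℝ)).neg
      have := (hasd' hg (-0 : ℝ)).comp 0 h1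
      simpa [Function.comp_def] using this
    have heq : (fun y : ℝ => g (-y)) = g := funext heven
    rw [heq] at hneg
    have := hneg.deriv
    rw [← hg1def] at this
    linarith [this]
  -- solve for g1 via osc
  have hosc : ∀ t, g1 t = (g2 0 / μ) * Real.sin (μ * t) := by
    intro t
    have := osc μ hμ g1 g2 (fun s => hasd' hg1 s)
      (fun s => by simpa [← hode s] using hasd' hg2 s) 0 t
    simpa [h10] using this
  -- integrate: g t = g 0 + (g2 0/μ²)(1 - cos (μ t))
  set Q := g2 0 / μ^2 with hQ
  have hrep : ∀ t, g t = g 0 + Q * (1 - Real.cos (μ * t)) := by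
    have hψ : ∀ s, HasDerivAt (fun t => g 0 + Q * (1 - Real.cos (μ * t))) (g1 s) s := by
      intro s
      have h1 : HasDerivAt (fun u : ℝ => μ * u) μ s := by
        simpa using (hasDerivAt_id s).const_mul μ
      have hc : HasDerivAt (fun t : ℝ => Real.cos (μ * t)) (-Real.sin (μ * s) * μ) s := by
        simpa [Function.comp_def] using (Real.hasDerivAt_cos (μ * s)).comp s h1
      have h2 := ((hc.const_mul Q).neg).const_add (g 0 + Q)
      have heqf : (fun t => g 0 + Q * (1 - Real.cos (μ * t)))
          = (fun t => g 0 + Q + -(Q * Real.cos (μ * t))) := by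
        funext t; ring
      rw [heqf, hosc s]
      exact h2.congr_deriv (by rw [hQ]; field_simp)
    have hwd : ∀ s, HasDerivAt (fun t => g t - (g 0 + Q * (1 - Real.cos (μ * t)))) 0 s := by
      intro s
      exact ((hasd' hg s).sub (hψ s)).congr_deriv (sub_self _)
    intro t
    have := is_const_of_deriv_eq_zero (fun u => (hwd u).differentiableAt)
      (fun u => (hwd u).deriv) t 0
    simp at this
    linarith [this]
  have hY := hrep (π/μ)
  rw [mul_div_cancel₀ _ hμ'] at hY
  rw [Real.cos_pi] at hY
  linear_combination hrep y - ((1 - Real.cos (μ*y))/2) * hY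
/-- second derivative of `a + b cos (om t)` -/
private lemma deriv2_trig (a b om : ℝ) (y : ℝ) :
    deriv (deriv (fun t => a + b * Real.cos (om * t))) y = -(b * om^2) * Real.cos (om * y) := by
  have h1 : ∀ s : ℝ, HasDerivAt (fun t => a + b * Real.cos (om * t)) (-(b * om) * Real.sin (om * s)) s := by
    intro s
    have hm : HasDerivAt (fun u : ℝ => om * u) om s := by
      simpa using (hasDerivAt_id s).const_mul om
    have hc : HasDerivAt (fun t : ℝ => Real.cos (om * t)) (-Real.sin (om * s) * om) s := by
      simpa [Function.comp_def] using (Real.hasDerivAt_cos (om * s)).comp s hm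
    have := (hc.const_mul b).const_add a
    exact this.congr_deriv (by ring)
  have h2 : deriv (fun t => a + b * Real.cos (om * t)) = fun s => -(b * om) * Real.sin (om * s) :=
    funext fun s => (h1 s).deriv
  rw [h2]
  have hm : HasDerivAt (fun u : ℝ => om * u) om y := by
    simpa using (hasDerivAt_id y).const_mul om
  have hs : HasDerivAt (fun t : ℝ => Real.sin (om * t)) (Real.cos (om * y) * om) y := by
    simpa [Function.comp_def] using (Real.hasDerivAt_sin (om * y)).comp y hm
  have := (hs.const_mul (-(b * om))).deriv
  rw [this]
  ring

end Aux

set_option maxHeartbeats 2000000 in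
/-- Any nonzero smooth solution in symmetry class A1 annihilated by the
operator `4 ∂³/∂y³ + 3k² ∂/∂y` and satisfying the Dirichlet boundary conditions
is (a multiple of) the ground state of the equilateral triangle or one of its
harmonics. -/
theorem ground_state_characterization
    (ℓ k : ℝ) (hℓ : 0 < ℓ) (hk : 0 < k)
    (f : ℝ × ℝ → ℝ) (hf : ContDiff ℝ (⊤ : ℕ∞) f)
    (heven : ∀ x y : ℝ, f (x, -y) = f (x, y))
    (hH : ∀ p : ℝ × ℝ, pdx (pdx f) p + pdy (pdy f) p + k ^ 2 * f p = 0)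
    (hann : ∀ p : ℝ × ℝ, 4 * pdy (pdy (pdy f)) p + 3 * k ^ 2 * pdy f p = 0)
    (hbd1 : ∀ y : ℝ, f (-ℓ / 2, y) = 0)
    (hbd2 : ∀ x : ℝ, f (x, (ℓ - x) / Real.sqrt 3) = 0)
    (hne : ¬ ∀ p : ℝ × ℝ, f p = 0) :
    ∃ (n : ℕ) (A : ℝ), 0 < n ∧ A ≠ 0 ∧ k = 4 * Real.pi * n / (3 * ℓ) ∧
      ∀ x y : ℝ, f (x, y) = A *
        (Real.sin (k * (x + ℓ / 2)) +
          2 * (-1 : ℝ) ^ (n + 1) * Real.sin ((k / 2) * (x + ℓ / 2)) *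
            Real.cos ((Real.sqrt 3 * k / 2) * y)) := by
  have hf' : ContDiff ℝ ((⊤ : ℕ∞) : WithTop ℕ∞) f := hf.of_le (by simp)
  have h3 : (0:ℝ) < Real.sqrt 3 := Real.sqrt_pos.mpr (by norm_num)
  have hk' : k ≠ 0 := ne_of_gt hk
  set μ : ℝ := Real.sqrt 3 * k / 2 with hμdef
  have hμ : 0 < μ := by positivity
  have hμ' : μ ≠ 0 := ne_of_gt hμ
  have hμsq : μ^2 = 3 * k^2 / 4 := by
    rw [hμdef, div_pow, mul_pow, Real.sq_sqrt (by norm_num : (3:ℝ) ≥ 0)]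
    ring
  set Y : ℝ := π / μ with hYdef
  set u : ℝ → ℝ := fun x => f (x, 0) with hu_def
  set v : ℝ → ℝ := fun x => f (x, Y) with hv_def
  set c : ℝ → ℝ := fun x => (u x + v x) / 2 with hc_def
  set d : ℝ → ℝ := fun x => (u x - v x) / 2 with hd_def
  -- Step A : the representation f (x, y) = c x + d x * cos (μ y)
  have key1 : ∀ x y : ℝ, f (x, y) = c x + d x * Real.cos (μ * y) := by
    intro x y
    have hg : ContDiff ℝ ((⊤:ℕ∞) : WithTop ℕ∞) (fun t => f (x, t)) :=
      hf'.comp (contDiff_const.prodMk contDiff_id)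
    have hode : ∀ t : ℝ, deriv (deriv (deriv (fun s => f (x, s)))) t
        = -(μ^2) * deriv (fun s => f (x, s)) t := by
      intro t
      have h := hann (x, t)
      have e1 : pdy (pdy (pdy f)) (x, t) = deriv (deriv (deriv (fun s => f (x, s)))) t := rfl
      have e2 : pdy f (x, t) = deriv (fun s => f (x, s)) t := rfl
      rw [e1, e2] at h
      have h4 : (3:ℝ) * k^2 = 4 * μ^2 := by rw [hμsq]; ring
      linear_combination (1/4) * h - (deriv (fun s => f (x, s)) t / 4) * h4
    have := stepA μ hμ (fun t => f (x, t)) hg (fun s => heven x s) hode y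
    rw [this, hc_def, hd_def, hu_def, hv_def, hYdef]
  -- smoothness of u, v
  have hu : ContDiff ℝ ((⊤:ℕ∞) : WithTop ℕ∞) u := hf'.comp (contDiff_id.prodMk contDiff_const)
  have hv : ContDiff ℝ ((⊤:ℕ∞) : WithTop ℕ∞) v := hf'.comp (contDiff_id.prodMk contDiff_const)
  -- second derivatives of the y-slices
  have hyy : ∀ x y0 : ℝ, pdy (pdy f) (x, y0) = -(d x * μ^2) * Real.cos (μ * y0) := by
    intro x y0
    have e1 : pdy (pdy f) (x, y0) = deriv (deriv (fun t => f (x, t))) y0 := rfl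
    rw [e1]
    have e2 : (fun t => f (x, t)) = (fun t => c x + d x * Real.cos (μ * t)) :=
      funext fun t => key1 x t
    rw [e2, deriv2_trig]
  have hμY : μ * Y = π := by rw [hYdef]; field_simp
  -- ODEs for u and v
  have hu2 : ∀ x : ℝ, deriv (deriv u) x = d x * μ^2 - k^2 * u x := by
    intro x
    have h := hH (x, 0)
    have e1 : pdx (pdx f) (x, 0) = deriv (deriv u) x := rfl
    rw [e1, hyy x 0] at h
    have e3 : f (x, 0) = u x := rfl
    rw [e3] at h
    rw [mul_zero, Real.cos_zero] at h
    linarith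
  have hv2 : ∀ x : ℝ, deriv (deriv v) x = -(d x * μ^2) - k^2 * v x := by
    intro x
    have h := hH (x, Y)
    have e1 : pdx (pdx f) (x, Y) = deriv (deriv v) x := rfl
    rw [e1, hyy x Y, hμY, Real.cos_pi] at h
    have e3 : f (x, Y) = v x := rfl
    rw [e3] at h
    linarith
  -- c satisfies c'' = -k² c ; d satisfies d'' = -(k/2)² d
  set c' : ℝ → ℝ := fun s => (deriv u s + deriv v s) / 2 with hc'_def
  set d' : ℝ → ℝ := fun s => (deriv u s - deriv v s) / 2 with hd'_def
  have hcd : ∀ s, HasDerivAt c (c' s) s :=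
    fun s => ((hasd' hu s).add (hasd' hv s)).div_const 2
  have hdd : ∀ s, HasDerivAt d (d' s) s :=
    fun s => ((hasd' hu s).sub (hasd' hv s)).div_const 2
  have hcd' : ∀ s, HasDerivAt c' (-(k^2) * c s) s := by
    intro s
    have h := ((hasd' (smooth_deriv' hu) s).add (hasd' (smooth_deriv' hv) s)).div_const 2
    have : (deriv (deriv u) s + deriv (deriv v) s) / 2 = -(k^2) * c s := by
      rw [hu2 s, hv2 s, hc_def]
      ring
    rwa [this] at h
  have hdd' : ∀ s, HasDerivAt d' (-((k/2)^2) * d s) s := by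
    intro s
    have h := ((hasd' (smooth_deriv' hu) s).sub (hasd' (smooth_deriv' hv) s)).div_const 2
    have : (deriv (deriv u) s - deriv (deriv v) s) / 2 = -((k/2)^2) * d s := by
      rw [hu2 s, hv2 s, hd_def, hμsq]
      ring
    rwa [this] at h
  -- boundary values at x = -ℓ/2
  have hc0 : c (-ℓ/2) = 0 := by
    rw [hc_def]
    simp only [hu_def, hv_def]
    rw [show -ℓ/2 = -ℓ/2 from rfl]
    have b1 := hbd1 0
    have b2 := hbd1 Y
    norm_num [neg_div] at b1 b2 ⊢
    rw [b1, b2]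
    norm_num
  have hd0 : d (-ℓ/2) = 0 := by
    rw [hd_def]
    simp only [hu_def, hv_def]
    have b1 := hbd1 0
    have b2 := hbd1 Y
    norm_num [neg_div] at b1 b2 ⊢
    rw [b1, b2]
    norm_num
  -- solve the ODEs for c and d
  set α : ℝ := c' (-ℓ/2) / k with hα_def
  set δ : ℝ := d' (-ℓ/2) / (k/2) with hδ_def
  have hcsol : ∀ x, c x = α * Real.sin (k * (x + ℓ/2)) := by
    intro x
    have := osc k hk c c' hcd hcd' (-ℓ/2) x
    rw [hc0] at this
    rw [show k * (x - -ℓ/2) = k * (x + ℓ/2) by ring] at this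
    rw [this, hα_def]
    ring
  have hdsol : ∀ x, d x = δ * Real.sin ((k/2) * (x + ℓ/2)) := by
    intro x
    have := osc (k/2) (by positivity) d d' hdd hdd' (-ℓ/2) x
    rw [hd0] at this
    rw [show k/2 * (x - -ℓ/2) = (k/2) * (x + ℓ/2) by ring] at this
    rw [this, hδ_def]
    ring
  have rep : ∀ x y : ℝ, f (x, y) =
      α * Real.sin (k * (x + ℓ/2)) + δ * Real.sin ((k/2) * (x + ℓ/2)) * Real.cos (μ * y) := by
    intro x y
    rw [key1 x y, hcsol x, hdsol x]
  -- the slanted boundary condition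
  set θ : ℝ := 3 * k * ℓ / 4 with hθ_def
  have hslant : ∀ x : ℝ, α * Real.sin (k * (x + ℓ/2))
      + δ * Real.sin ((k/2) * (x + ℓ/2)) * Real.cos (k * (ℓ - x) / 2) = 0 := by
    intro x
    have h := hbd2 x
    rw [rep x ((ℓ - x) / Real.sqrt 3)] at h
    have harg : μ * ((ℓ - x) / Real.sqrt 3) = k * (ℓ - x) / 2 := by
      rw [hμdef]
      rw [div_mul_div_comm]
      rw [div_eq_div_iff (by positivity) (by norm_num)]
      have : Real.sqrt 3 * Real.sqrt 3 = 3 := Real.mul_self_sqrt (by norm_num)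
      nlinarith [this]
    rwa [harg] at h
  -- evaluate at two special points
  have eq1 : δ * Real.sin θ = 0 := by
    have h := hslant (π/k - ℓ/2)
    rw [show k * ((π/k - ℓ/2) + ℓ/2) = π by field_simp; ring] at h
    rw [show (k/2) * ((π/k - ℓ/2) + ℓ/2) = π/2 by field_simp; ring] at h
    rw [show k * (ℓ - (π/k - ℓ/2)) / 2 = θ - π/2 by rw [hθ_def]; field_simp; ring] at h
    rw [Real.sin_pi, Real.sin_pi_div_two, Real.cos_sub_pi_div_two] at h
    linarith
  have eq2 : 2 * α + δ * Real.cos θ = 0 := by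
    have h := hslant (π/(2*k) - ℓ/2)
    rw [show k * ((π/(2*k) - ℓ/2) + ℓ/2) = π/2 by field_simp; ring] at h
    rw [show (k/2) * ((π/(2*k) - ℓ/2) + ℓ/2) = π/4 by field_simp; ring] at h
    rw [show k * (ℓ - (π/(2*k) - ℓ/2)) / 2 = θ - π/4 by rw [hθ_def]; field_simp; ring] at h
    rw [Real.sin_pi_div_two, Real.cos_sub, Real.cos_pi_div_four, Real.sin_pi_div_four] at h
    have s2 : Real.sqrt 2 * Real.sqrt 2 = 2 := Real.mul_self_sqrt (by norm_num)
    linear_combination 2*h + (-(δ*(Real.cos θ + Real.sin θ))/2) * s2 - eq1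
  -- f nonzero forces δ ≠ 0
  have hδ0 : δ ≠ 0 := by
    intro h0
    have hα0 : α = 0 := by rw [h0] at eq2; linarith
    apply hne
    intro p
    have := rep p.1 p.2
    rw [Prod.mk.eta] at this
    rw [this, h0, hα0]
    ring
  have hsθ : Real.sin θ = 0 := by
    rcases mul_eq_zero.mp eq1 with h | h
    · exact absurd h hδ0
    · exact h
  obtain ⟨m, hm⟩ := Real.sin_eq_zero_iff.mp hsθ
  have hθpos : 0 < θ := by rw [hθ_def]; positivity
  have hmpos : 0 < m := by
    by_contra hcon
    push_neg at hcon
    have : (m:ℝ) ≤ 0 := by exact_mod_cast hcon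
    nlinarith [Real.pi_pos, hm, hθpos]
  set n : ℕ := m.toNat with hn_def
  have hmn : (m:ℝ) = (n:ℝ) := by
    rw [hn_def]
    exact_mod_cast (Int.toNat_of_nonneg hmpos.le).symm
  have hnpos : 0 < n := by omega
  have hcosθ : Real.cos θ = (-1)^n := by
    rw [← hm, hmn]
    have := Real.cos_nat_mul_pi_sub 0 n
    simpa using this
  have hk_eq : k = 4 * π * n / (3 * ℓ) := by
    have : (n:ℝ) * π = 3 * k * ℓ / 4 := by rw [← hmn, hm, hθ_def]
    field_simp
    linarith
  have hα0 : α ≠ 0 := by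
    intro h0
    rw [h0] at eq2
    have : δ * Real.cos θ = 0 := by linarith
    rcases mul_eq_zero.mp this with h | h
    · exact hδ0 h
    · rw [hcosθ] at h
      exact pow_ne_zero n (by norm_num : (-1:ℝ) ≠ 0) h
  have hδα : δ = 2 * α * (-1)^(n+1) := by
    have hsq : ((-1:ℝ)^n) * ((-1:ℝ)^n) = 1 := by
      rw [← pow_add, ← two_mul, pow_mul]; norm_num
    rw [hcosθ] at eq2
    rw [pow_succ]
    linear_combination ((-1:ℝ)^n) * eq2 - δ * hsq
  refine ⟨n, α, hnpos, hα0, hk_eq, ?_⟩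
  intro x y
  rw [rep x y, hδα]
  ring
end
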